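/- Let P be a probability distribution on X × A × B with A = B = {0,1} and X = [d] for d ≥ 2. Then the optimal classical simultaneous guessing probability (maximum over functions f : A → X and g : B → X of ∑_{a,b} P(f(a),a,b)·1[f(a)=g(b)]) equals the maximum over distinct s,t ∈ X of max{ P_X(s), P(s,0,0)+P(t,1,1), P(s,0,1)+P(t,1,0) }, where P_X is the marginal on X. -/
import Mathlib


/-- Lemma 1 (classical part): for a distribution on [d] × {0,1} × {0,1}, the optimal
classical simultaneous guessing probability equals the maximum over distinct s ≠ t of
max{P_X(s), P(s,0,0)+P(t,1,1), P(s,0,1)+P(t,1,0)}. -/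
theorem classical_value_binary_inputs (d : ℕ) (hd : 2 ≤ d)
    (P : Fin d → Fin 2 → Fin 2 → ℝ)
    (hP0 : ∀ x a b, 0 ≤ P x a b)
    (hP1 : ∑ x, ∑ a, ∑ b, P x a b = 1) :
    sSup {p : ℝ | ∃ f g : Fin 2 → Fin d,
        p = ∑ x, ∑ a, ∑ b, P x a b * (if f a = x ∧ g b = x then 1 else 0)} =
    sSup {q : ℝ | ∃ s t : Fin d, s ≠ t ∧
        (q = ∑ a, ∑ b, P s a b ∨
         q = P s 0 0 + P t 1 1 ∨
         q = P s 0 1 + P t 1 0)} := by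
  have hnt : Nontrivial (Fin d) := by
    have : 1 < Fintype.card (Fin d) := by simpa using by omega
    exact Fintype.one_lt_card_iff_nontrivial.mp this
  set S : Set ℝ := {p : ℝ | ∃ f g : Fin 2 → Fin d,
        p = ∑ x, ∑ a, ∑ b, P x a b * (if f a = x ∧ g b = x then 1 else 0)} with hSdef
  set T : Set ℝ := {q : ℝ | ∃ s t : Fin d, s ≠ t ∧
        (q = ∑ a, ∑ b, P s a b ∨
         q = P s 0 0 + P t 1 1 ∨
         q = P s 0 1 + P t 1 0)} with hTdef
  have key : ∀ f g : Fin 2 → Fin d,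
      (∑ x, ∑ a, ∑ b, P x a b * (if f a = x ∧ g b = x then 1 else 0))
      = ∑ a : Fin 2, ∑ b : Fin 2, (if f a = g b then P (f a) a b else 0) := by
    intro f g
    rw [Finset.sum_comm]
    refine Finset.sum_congr rfl fun a _ => ?_
    rw [Finset.sum_comm]
    refine Finset.sum_congr rfl fun b _ => ?_
    by_cases h : f a = g b
    · rw [if_pos h, ← h]
      have hc : ∀ x ∈ (Finset.univ : Finset (Fin d)),
          P x a b * (if f a = x ∧ f a = x then 1 else 0)
            = if f a = x then P x a b else 0 := by
        intro x _; by_cases hx : f a = x <;> simp [hx]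
      rw [Finset.sum_congr rfl hc, Finset.sum_ite_eq]
      simp
    · rw [if_neg h]
      refine Finset.sum_eq_zero fun x _ => ?_
      rw [if_neg, mul_zero]
      rintro ⟨h1, h2⟩; exact h (h1.trans h2.symm)
  have val : ∀ f g : Fin 2 → Fin d,
      (∑ a : Fin 2, ∑ b : Fin 2, (if f a = g b then P (f a) a b else 0))
      = ((if f 0 = g 0 then P (f 0) 0 0 else 0) + (if f 0 = g 1 then P (f 0) 0 1 else 0))
        + ((if f 1 = g 0 then P (f 1) 1 0 else 0) + (if f 1 = g 1 then P (f 1) 1 1 else 0)) := by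
    intro f g; rw [Fin.sum_univ_two, Fin.sum_univ_two, Fin.sum_univ_two]
  have expand : ∀ s : Fin d,
      (∑ a : Fin 2, ∑ b : Fin 2, P s a b) = (P s 0 0 + P s 0 1) + (P s 1 0 + P s 1 1) := by
    intro s; rw [Fin.sum_univ_two, Fin.sum_univ_two, Fin.sum_univ_two]
  -- every element of S is at most 1, hence S is bounded above
  have hub : ∀ p ∈ S, p ≤ 1 := by
    rintro p ⟨f, g, rfl⟩
    calc (∑ x, ∑ a, ∑ b, P x a b * (if f a = x ∧ g b = x then 1 else 0))
        ≤ ∑ x, ∑ a, ∑ b, P x a b := by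
          refine Finset.sum_le_sum fun x _ => Finset.sum_le_sum fun a _ =>
            Finset.sum_le_sum fun b _ => ?_
          by_cases h : f a = x ∧ g b = x <;> simp [h, hP0 x a b]
      _ = 1 := hP1
  have hSbdd : BddAbove S := ⟨1, hub⟩
  -- T ⊆ S
  have hTS : T ⊆ S := by
    rintro q ⟨s, t, hst, hq⟩
    rcases hq with rfl | rfl | rfl
    · refine ⟨fun _ => s, fun _ => s, ?_⟩
      rw [key]; simp
    · refine ⟨![s, t], ![s, t], ?_⟩
      rw [key, val]
      simp [hst, Ne.symm hst]
    · refine ⟨![s, t], ![t, s], ?_⟩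
      rw [key, val]
      simp [hst, Ne.symm hst]
  have hTbdd : BddAbove T := ⟨1, fun q hq => hub q (hTS hq)⟩
  have hTne : T.Nonempty := by
    obtain ⟨s, t, hst⟩ := exists_pair_ne (Fin d)
    exact ⟨_, s, t, hst, Or.inl rfl⟩
  have hSne : S.Nonempty := by
    obtain ⟨s, t, hst⟩ := exists_pair_ne (Fin d)
    exact ⟨_, fun _ => s, fun _ => s, rfl⟩
  apply le_antisymm
  · refine csSup_le hSne ?_
    rintro p ⟨f, g, rfl⟩
    rw [key, val]
    by_cases hf : f 0 = f 1
    · -- bound by the marginal P_X (f 0)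
      obtain ⟨t, ht⟩ := exists_ne (f 0)
      refine le_csSup_of_le hTbdd
        (show (∑ a : Fin 2, ∑ b : Fin 2, P (f 0) a b) ∈ T from
          ⟨f 0, t, Ne.symm ht, Or.inl rfl⟩) ?_
      rw [← hf, expand]
      split_ifs <;>
        linarith [hP0 (f 0) 0 0, hP0 (f 0) 0 1, hP0 (f 0) 1 0, hP0 (f 0) 1 1]
    · by_cases hg0 : g 0 = f 1
      · have c1 : ¬ (f 0 = g 0) := by rw [hg0]; exact hf
        by_cases hg1 : g 1 = f 0
        · have c4 : ¬ (f 1 = g 1) := by rw [hg1]; exact Ne.symm hf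
          refine le_csSup_of_le hTbdd
            (show (P (f 0) 0 1 + P (f 1) 1 0) ∈ T from
              ⟨f 0, f 1, hf, Or.inr (Or.inr rfl)⟩) ?_
          rw [if_neg c1, if_neg c4, if_pos hg1.symm, if_pos hg0.symm]
          linarith
        · have c2 : ¬ (f 0 = g 1) := fun h => hg1 h.symm
          refine le_csSup_of_le hTbdd
            (show (∑ a : Fin 2, ∑ b : Fin 2, P (f 1) a b) ∈ T from
              ⟨f 1, f 0, Ne.symm hf, Or.inl rfl⟩) ?_
          rw [if_neg c1, if_neg c2, if_pos hg0.symm, expand]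
          split_ifs <;>
            linarith [hP0 (f 1) 0 0, hP0 (f 1) 0 1, hP0 (f 1) 1 0, hP0 (f 1) 1 1]
      · have c3 : ¬ (f 1 = g 0) := fun h => hg0 h.symm
        by_cases hg1 : g 1 = f 0
        · have c4 : ¬ (f 1 = g 1) := by rw [hg1]; exact Ne.symm hf
          refine le_csSup_of_le hTbdd
            (show (∑ a : Fin 2, ∑ b : Fin 2, P (f 0) a b) ∈ T from
              ⟨f 0, f 1, hf, Or.inl rfl⟩) ?_
          rw [if_neg c3, if_neg c4, if_pos hg1.symm, expand]
          split_ifs <;>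
            linarith [hP0 (f 0) 0 0, hP0 (f 0) 0 1, hP0 (f 0) 1 0, hP0 (f 0) 1 1]
        · have c2 : ¬ (f 0 = g 1) := fun h => hg1 h.symm
          refine le_csSup_of_le hTbdd
            (show (P (f 0) 0 0 + P (f 1) 1 1) ∈ T from
              ⟨f 0, f 1, hf, Or.inr (Or.inl rfl)⟩) ?_
          rw [if_neg c3, if_neg c2]
          split_ifs <;>
            linarith [hP0 (f 0) 0 0, hP0 (f 1) 1 1]
  · exact csSup_le hTne fun q hq => le_csSup hSbdd (hTS hq)
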